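/- arXiv:2411.13193 — 2 statements merged into one kernel-verified Lean document; each statement's English description precedes it below -/
import Mathlib

section
/- In a diagonally framed dissection of a convex n-gon, for each intersectional component C of the set of diagonals, the graph of the dissection restricted to the support of C is complete: every pair of distinct vertices in Sup(C) is joined by an edge (outer edge or diagonal) of the dissection. -/
/-- Outer edge of the convex m-gon with vertices 1,...,m. -/
def OuterEdge (m : ℕ) (p : ℕ × ℕ) : Prop :=
  (1 ≤ p.1 ∧ p.2 = p.1 + 1 ∧ p.2 ≤ m) ∨ (p.1 = 1 ∧ p.2 = m)

/-- A (non-degenerate) diagonal of the convex m-gon with vertices 1,...,m. -/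
def IsDiag (m : ℕ) (p : ℕ × ℕ) : Prop :=
  1 ≤ p.1 ∧ p.1 + 1 < p.2 ∧ p.2 ≤ m ∧ ¬ (p.1 = 1 ∧ p.2 = m)

/-- A dissection of the convex m-gon: a set of diagonals. -/
def Dissection (m : ℕ) (D : Set (ℕ × ℕ)) : Prop :=
  ∀ p ∈ D, IsDiag m p

/-- Two chords of a convex polygon cross iff their endpoints interleave. -/
def Cross (p q : ℕ × ℕ) : Prop :=
  (p.1 < q.1 ∧ q.1 < p.2 ∧ p.2 < q.2) ∨ (q.1 < p.1 ∧ p.1 < q.2 ∧ q.2 < p.2)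

/-- A chord is an edge of the graph of the dissection: a diagonal of D or an outer edge. -/
def EdgeOf (m : ℕ) (D : Set (ℕ × ℕ)) (p : ℕ × ℕ) : Prop :=
  p ∈ D ∨ OuterEdge m p

/-- Vertices u and v are joined by an edge of the graph of the dissection. -/
def EdgeBtw (m : ℕ) (D : Set (ℕ × ℕ)) (u v : ℕ) : Prop :=
  EdgeOf m D (min u v, max u v)

/-- A dissection is diagonally framed if the four sides of every pair of crossing
diagonals are edges of the graph of the dissection. -/
def DiagFramed (m : ℕ) (D : Set (ℕ × ℕ)) : Prop :=
  ∀ a b c d : ℕ, a < b → b < c → c < d → (a, c) ∈ D → (b, d) ∈ D →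
    EdgeOf m D (a, b) ∧ EdgeOf m D (b, c) ∧ EdgeOf m D (c, d) ∧ EdgeOf m D (a, d)

/-- Two diagonals of the dissection D cross each other. -/
def CrossRel (D : Set (ℕ × ℕ)) (p q : ℕ × ℕ) : Prop :=
  p ∈ D ∧ q ∈ D ∧ Cross p q

lemma edgeBtw_comm {n : ℕ} {D : Set (ℕ × ℕ)} {u v : ℕ} (h : EdgeBtw n D u v) :
    EdgeBtw n D v u := by
  unfold EdgeBtw at *; rwa [min_comm, max_comm]

lemma edgeBtw_of_edgeOf {n : ℕ} {D : Set (ℕ × ℕ)} {u v : ℕ} (h : u < v)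
    (he : EdgeOf n D (u, v)) : EdgeBtw n D u v := by
  unfold EdgeBtw; rw [min_eq_left h.le, max_eq_right h.le]; exact he

lemma mem_of_edgeBtw {n : ℕ} {D : Set (ℕ × ℕ)} {u v : ℕ} (h : u < v)
    (hE : EdgeBtw n D u v) (h1 : u + 1 < v) (h2 : ¬(u = 1 ∧ v = n)) : (u, v) ∈ D := by
  unfold EdgeBtw EdgeOf OuterEdge at hE
  rw [min_eq_left h.le, max_eq_right h.le] at hE
  rcases hE with h | h
  · exact h
  · exfalso; omega

/-- If s is joined to both endpoints of (a,c), and (b,d) crosses (a,c), then s is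
joined to both endpoints of (b,d). -/
lemma key1 {n : ℕ} {D : Set (ℕ × ℕ)} (hD : Dissection n D) (hF : DiagFramed n D)
    {a b c d s : ℕ} (hac : (a, c) ∈ D) (hbd : (b, d) ∈ D)
    (h1 : a < b) (h2 : b < c) (h3 : c < d)
    (hsa : s ≠ a → EdgeBtw n D s a) (hsc : s ≠ c → EdgeBtw n D s c) :
    (s ≠ b → EdgeBtw n D s b) ∧ (s ≠ d → EdgeBtw n D s d) := by
  have hA : 1 ≤ a ∧ a + 1 < c ∧ c ≤ n ∧ ¬(a = 1 ∧ c = n) := hD (a, c) hac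
  have hB : 1 ≤ b ∧ b + 1 < d ∧ d ≤ n ∧ ¬(b = 1 ∧ d = n) := hD (b, d) hbd
  rcases Nat.lt_trichotomy s b with hsb | rfl | hbs
  · -- s < b : use the chord (s,c), which crosses (b,d)
    have hsc' : (s, c) ∈ D := mem_of_edgeBtw (by omega) (hsc (by omega)) (by omega) (by omega)
    obtain ⟨e1, _, _, e4⟩ := hF s b c d hsb h2 h3 hsc' hbd
    exact ⟨fun _ => edgeBtw_of_edgeOf hsb e1, fun _ => edgeBtw_of_edgeOf (by omega) e4⟩
  · exact ⟨fun h => absurd rfl h, fun _ => edgeBtw_of_edgeOf (by omega) (Or.inl hbd)⟩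
  · rcases Nat.lt_trichotomy s d with hsd | rfl | hds
    · -- b < s < d : use the chord (a,s), which crosses (b,d)
      have has' : (a, s) ∈ D := mem_of_edgeBtw (by omega)
        (edgeBtw_comm (hsa (by omega))) (by omega) (by omega)
      obtain ⟨_, e2, e3, _⟩ := hF a b s d h1 hbs hsd has' hbd
      exact ⟨fun _ => edgeBtw_comm (edgeBtw_of_edgeOf hbs e2),
        fun _ => edgeBtw_of_edgeOf hsd e3⟩
    · exact ⟨fun _ => edgeBtw_comm (edgeBtw_of_edgeOf (by omega) (Or.inl hbd)),
        fun h => absurd rfl h⟩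
    · -- d < s : use the chord (c,s), which crosses (b,d)
      have hcs' : (c, s) ∈ D := mem_of_edgeBtw (by omega)
        (edgeBtw_comm (hsc (by omega))) (by omega) (by omega)
      obtain ⟨_, _, e3, e4⟩ := hF b c d s h2 h3 hds hbd hcs'
      exact ⟨fun _ => edgeBtw_comm (edgeBtw_of_edgeOf (by omega) e4),
        fun _ => edgeBtw_comm (edgeBtw_of_edgeOf hds e3)⟩

/-- If s is joined to both endpoints of (b,d), and (a,c) crosses (b,d), then s is
joined to both endpoints of (a,c). -/
lemma key2 {n : ℕ} {D : Set (ℕ × ℕ)} (hD : Dissection n D) (hF : DiagFramed n D)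
    {a b c d s : ℕ} (hac : (a, c) ∈ D) (hbd : (b, d) ∈ D)
    (h1 : a < b) (h2 : b < c) (h3 : c < d)
    (hsb : s ≠ b → EdgeBtw n D s b) (hsd : s ≠ d → EdgeBtw n D s d) :
    (s ≠ a → EdgeBtw n D s a) ∧ (s ≠ c → EdgeBtw n D s c) := by
  have hA : 1 ≤ a ∧ a + 1 < c ∧ c ≤ n ∧ ¬(a = 1 ∧ c = n) := hD (a, c) hac
  have hB : 1 ≤ b ∧ b + 1 < d ∧ d ≤ n ∧ ¬(b = 1 ∧ d = n) := hD (b, d) hbd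
  rcases Nat.lt_trichotomy s a with hsa | rfl | has
  · -- s < a : use the chord (s,b), which crosses (a,c)
    have hsb' : (s, b) ∈ D := mem_of_edgeBtw (by omega) (hsb (by omega)) (by omega) (by omega)
    obtain ⟨e1, _, _, e4⟩ := hF s a b c hsa h1 h2 hsb' hac
    exact ⟨fun _ => edgeBtw_of_edgeOf hsa e1, fun _ => edgeBtw_of_edgeOf (by omega) e4⟩
  · exact ⟨fun h => absurd rfl h, fun _ => edgeBtw_of_edgeOf (by omega) (Or.inl hac)⟩
  · rcases Nat.lt_trichotomy s b with hsb2 | heq | hbs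
    · -- a < s < b : use the chord (s,d), which crosses (a,c)
      have hsd' : (s, d) ∈ D := mem_of_edgeBtw (by omega) (hsd (by omega)) (by omega) (by omega)
      obtain ⟨e1, e2, _, _⟩ := hF a s c d has (by omega) h3 hac hsd'
      exact ⟨fun _ => edgeBtw_comm (edgeBtw_of_edgeOf has e1),
        fun _ => edgeBtw_of_edgeOf (by omega) e2⟩
    · -- s = b
      subst heq
      obtain ⟨e1, e2, _, _⟩ := hF a s c d h1 h2 h3 hac hbd
      exact ⟨fun _ => edgeBtw_comm (edgeBtw_of_edgeOf h1 e1),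
        fun _ => edgeBtw_of_edgeOf h2 e2⟩
    · rcases Nat.lt_trichotomy s c with hsc | rfl | hcs
      · -- b < s < c : use the chord (s,d), which crosses (a,c)
        have hsd' : (s, d) ∈ D := mem_of_edgeBtw (by omega) (hsd (by omega)) (by omega) (by omega)
        obtain ⟨e1, e2, _, _⟩ := hF a s c d has hsc h3 hac hsd'
        exact ⟨fun _ => edgeBtw_comm (edgeBtw_of_edgeOf has e1),
          fun _ => edgeBtw_of_edgeOf hsc e2⟩
      · exact ⟨fun _ => edgeBtw_comm (edgeBtw_of_edgeOf (by omega) (Or.inl hac)),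
          fun h => absurd rfl h⟩
      · rcases eq_or_ne s d with heq | hsd2
        · subst heq
          obtain ⟨_, _, e3, e4⟩ := hF a b c s h1 h2 h3 hac hbd
          exact ⟨fun _ => edgeBtw_comm (edgeBtw_of_edgeOf (by omega) e4),
            fun _ => edgeBtw_comm (edgeBtw_of_edgeOf h3 e3)⟩
        · -- c < s, s ≠ d : use the chord (b,s), which crosses (a,c)
          have hbs' : (b, s) ∈ D := mem_of_edgeBtw (by omega)
            (edgeBtw_comm (hsb (by omega))) (by omega) (by omega)
          obtain ⟨_, _, e3, e4⟩ := hF a b c s h1 h2 hcs hac hbs'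
          exact ⟨fun _ => edgeBtw_comm (edgeBtw_of_edgeOf (by omega) e4),
            fun _ => edgeBtw_comm (edgeBtw_of_edgeOf hcs e3)⟩

/-- The completeness predicate on a set of vertices. -/
def Comp (n : ℕ) (D : Set (ℕ × ℕ)) (S : Set ℕ) : Prop :=
  ∀ u ∈ S, ∀ v ∈ S, u ≠ v → EdgeBtw n D u v

lemma comp_extend {n : ℕ} {D : Set (ℕ × ℕ)} (hD : Dissection n D) (hF : DiagFramed n D)
    {S : Set ℕ} (hS : Comp n D S) {p q : ℕ × ℕ} (hpD : p ∈ D) (hqD : q ∈ D)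
    (hcr : Cross p q) (h1 : p.1 ∈ S) (h2 : p.2 ∈ S) :
    Comp n D (insert q.1 (insert q.2 S)) := by
  have hp' : (p.1, p.2) ∈ D := by rwa [Prod.mk.eta]
  have hq' : (q.1, q.2) ∈ D := by rwa [Prod.mk.eta]
  have hjoin : ∀ s ∈ insert q.1 (insert q.2 S),
      (s ≠ q.1 → EdgeBtw n D s q.1) ∧ (s ≠ q.2 → EdgeBtw n D s q.2) := by
    intro s hs
    have hqq : 1 ≤ q.1 ∧ q.1 + 1 < q.2 ∧ q.2 ≤ n ∧ ¬(q.1 = 1 ∧ q.2 = n) := hD q hqD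
    rcases hs with rfl | rfl | hsS
    · exact ⟨fun h => absurd rfl h,
        fun _ => edgeBtw_of_edgeOf (by omega) (Or.inl hq')⟩
    · exact ⟨fun _ => edgeBtw_comm (edgeBtw_of_edgeOf (by omega) (Or.inl hq')),
        fun h => absurd rfl h⟩
    · have hsa : s ≠ p.1 → EdgeBtw n D s p.1 := fun h => hS s hsS p.1 h1 h
      have hsc : s ≠ p.2 → EdgeBtw n D s p.2 := fun h => hS s hsS p.2 h2 h
      rcases hcr with ⟨l1, l2, l3⟩ | ⟨l1, l2, l3⟩
      · exact key1 hD hF hp' hq' l1 l2 l3 hsa hsc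
      · exact key2 hD hF hq' hp' l1 l2 l3 hsa hsc
  intro u hu v hv huv
  rcases hv with rfl | rfl | hvS
  · exact (hjoin u hu).1 huv
  · exact (hjoin u hu).2 huv
  · rcases hu with rfl | rfl | huS
    · exact edgeBtw_comm ((hjoin v (Or.inr (Or.inr hvS))).1 huv.symm)
    · exact edgeBtw_comm ((hjoin v (Or.inr (Or.inr hvS))).2 huv.symm)
    · exact hS u huS v hvS huv

lemma comp_chain {n : ℕ} {D : Set (ℕ × ℕ)} (hD : Dissection n D) (hF : DiagFramed n D)
    {S : Set ℕ} (hS : Comp n D S) {r q : ℕ × ℕ}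
    (hr : Relation.ReflTransGen (CrossRel D) r q) (h1 : r.1 ∈ S) (h2 : r.2 ∈ S) :
    ∃ T, S ⊆ T ∧ Comp n D T ∧ q.1 ∈ T ∧ q.2 ∈ T := by
  induction hr with
  | refl => exact ⟨S, subset_rfl, hS, h1, h2⟩
  | tail _ hcr ih =>
    obtain ⟨T, hST, hT, hm1, hm2⟩ := ih
    obtain ⟨hmD, hqD, hcross⟩ := hcr
    refine ⟨insert _ (insert _ T), ?_, comp_extend hD hF hT hmD hqD hcross hm1 hm2,
      Or.inl rfl, Or.inr (Or.inl rfl)⟩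
    exact hST.trans ((Set.subset_insert _ _).trans (Set.subset_insert _ _))

/-- in a diagonally framed dissection of a convex n-gon, the graph of the
dissection restricted to the support of any intersectional component is complete: any
two distinct endpoints u, v of diagonals p, q lying in the same intersectional
component (the equivalence class generated by the crossing relation, here witnessed by
chains from a common diagonal d) are joined by an edge of the dissection. -/
theorem intersectional_component_support_complete (n : ℕ) (D : Set (ℕ × ℕ))
    (hD : Dissection n D) (hF : DiagFramed n D)
    (d p q : ℕ × ℕ) (hd : d ∈ D) (hpD : p ∈ D) (hqD : q ∈ D)
    (hp : Relation.ReflTransGen (CrossRel D) d p)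
    (hq : Relation.ReflTransGen (CrossRel D) d q)
    (u v : ℕ) (hu : u = p.1 ∨ u = p.2) (hv : v = q.1 ∨ v = q.2) (huv : u ≠ v) :
    EdgeBtw n D u v := by
  have hdd : 1 ≤ d.1 ∧ d.1 + 1 < d.2 ∧ d.2 ≤ n ∧ ¬(d.1 = 1 ∧ d.2 = n) := hD d hd
  have hd' : (d.1, d.2) ∈ D := by rwa [Prod.mk.eta]
  have hS0 : Comp n D {d.1, d.2} := by
    intro a ha b hb hab
    rcases ha with rfl | ha <;> rcases hb with rfl | hb
    · exact absurd rfl hab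
    · rw [Set.mem_singleton_iff] at hb; subst hb
      exact edgeBtw_of_edgeOf (by omega) (Or.inl hd')
    · rw [Set.mem_singleton_iff] at ha; subst ha
      exact edgeBtw_comm (edgeBtw_of_edgeOf (by omega) (Or.inl hd'))
    · rw [Set.mem_singleton_iff] at ha hb; subst ha; subst hb; exact absurd rfl hab
  obtain ⟨T1, hST1, hT1, hp1, hp2⟩ := comp_chain hD hF hS0 hp
    (Or.inl rfl) (Or.inr rfl)
  obtain ⟨T2, hT12, hT2, hq1, hq2⟩ := comp_chain hD hF hT1 hq
    (hST1 (Or.inl rfl)) (hST1 (Or.inr rfl))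
  have huT : u ∈ T2 := by
    rcases hu with rfl | rfl
    · exact hT12 hp1
    · exact hT12 hp2
  have hvT : v ∈ T2 := by
    rcases hv with rfl | rfl
    · exact hq1
    · exact hq2
  exact hT2 u huT v hvT huv
end

section
/- If a dissection Φ(P) arising from an interval poset P contained a quadrilateral face on vertices a < b < c < d with edges (a,b),(b,c),(c,d),(a,d) and no diagonal inside, then P would contain an element [a,d-1] covering exactly the three elements [a,b-1],[b,c-1],[c,d-1], which is impossible; hence Φ(P) has no quadrilateral face. -/
/-- A set of values in `Fin n` is consecutive if it is closed under betweenness. -/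
def Consec {n : ℕ} (S : Finset (Fin n)) : Prop :=
  ∀ ⦃x y z : Fin n⦄, x ∈ S → z ∈ S → x ≤ y → y ≤ z → y ∈ S

/-- `I` is an interval of the permutation `π` if both `I` and its preimage under `π`
are sets of consecutive integers. -/
def IsInterval {n : ℕ} (π : Equiv.Perm (Fin n)) (I : Finset (Fin n)) : Prop :=
  Consec I ∧ Consec (I.image π.symm)

/-- The 1-based integer interval `[a,b]` viewed inside `Fin n`
(the element `x : Fin n` represents the value `x.val + 1`). -/
def ivl (n a b : ℕ) : Finset (Fin n) :=
  Finset.univ.filter (fun x => a ≤ x.val + 1 ∧ x.val + 1 ≤ b)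

/-- The interval poset of π encoded by endpoint pairs: (a,b) with 1 ≤ a ≤ b ≤ n such
that [a,b] is an interval of π. -/
def PosetPairs (n : ℕ) (π : Equiv.Perm (Fin n)) : Set (ℕ × ℕ) :=
  {p | 1 ≤ p.1 ∧ p.1 ≤ p.2 ∧ p.2 ≤ n ∧ IsInterval π (ivl n p.1 p.2)}

/-- The set of interval posets (so encoded) with n minimal elements. -/
def IntervalPosets (n : ℕ) : Set (Set (ℕ × ℕ)) :=
  {P | ∃ π : Equiv.Perm (Fin n), P = PosetPairs n π}

/-- Φ sends each non-minimal (non-singleton) and non-maximal element [a,b] of the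
poset to the diagonal (a, b+1) of the convex (n+1)-gon. -/
def Phi (n : ℕ) (P : Set (ℕ × ℕ)) : Set (ℕ × ℕ) :=
  {q | ∃ a b : ℕ, (a, b) ∈ P ∧ a < b ∧ ¬ (a = 1 ∧ b = n) ∧ q = (a, b + 1)}

/-- No diagonal of D passes through the interior of the quadrilateral a < b < c < d. -/
def NoDiagInsideQuad (D : Set (ℕ × ℕ)) (a b c d : ℕ) : Prop :=
  ¬ ∃ p ∈ D, Cross p (a, b) ∨ Cross p (b, c) ∨ Cross p (c, d) ∨ Cross p (a, d) ∨
      p = (a, c) ∨ p = (b, d)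

/-- The dissection D of the convex m-gon has a quadrilateral face. -/
def HasQuadFace (m : ℕ) (D : Set (ℕ × ℕ)) : Prop :=
  ∃ a b c d : ℕ, 1 ≤ a ∧ a < b ∧ b < c ∧ c < d ∧ d ≤ m ∧
    EdgeOf m D (a, b) ∧ EdgeOf m D (b, c) ∧ EdgeOf m D (c, d) ∧ EdgeOf m D (a, d) ∧
    NoDiagInsideQuad D a b c d

section Aux
variable {n : ℕ}

/-- natural number version of `Consec`. -/
def ConsecN (S : Finset ℕ) : Prop :=
  ∀ ⦃x y z : ℕ⦄, x ∈ S → z ∈ S → x ≤ y → y ≤ z → y ∈ S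

lemma consecN_of_eq_Icc {S : Finset ℕ} {a b : ℕ} (h : S = Finset.Icc a b) : ConsecN S := by
  subst h
  intro x y z hx hz h1 h2
  simp only [Finset.mem_Icc] at *
  omega

lemma eq_Icc_of_consecN {S : Finset ℕ} (h : ConsecN S) (hne : S.Nonempty) :
    ∃ a b : ℕ, a ≤ b ∧ S = Finset.Icc a b := by
  refine ⟨S.min' hne, S.max' hne, S.min'_le _ (S.max'_mem hne), ?_⟩
  ext t
  simp only [Finset.mem_Icc]
  exact ⟨fun ht => ⟨S.min'_le t ht, S.le_max' t ht⟩,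
    fun ⟨h1, h2⟩ => h (S.min'_mem hne) (S.max'_mem hne) h1 h2⟩

lemma three_blocks {S1 S2 S3 : Finset ℕ}
    (h1 : ConsecN S1) (h2 : ConsecN S2) (h3 : ConsecN S3)
    (hu : ConsecN (S1 ∪ S2 ∪ S3))
    (n1 : S1.Nonempty) (n2 : S2.Nonempty) (n3 : S3.Nonempty)
    (d12 : Disjoint S1 S2) (d13 : Disjoint S1 S3) (d23 : Disjoint S2 S3) :
    ConsecN (S1 ∪ S2) ∨ ConsecN (S2 ∪ S3) := by
  obtain ⟨a1, b1, g1, e1⟩ := eq_Icc_of_consecN h1 n1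
  obtain ⟨a2, b2, g2, e2⟩ := eq_Icc_of_consecN h2 n2
  obtain ⟨a3, b3, g3, e3⟩ := eq_Icc_of_consecN h3 n3
  subst e1 e2 e3
  have w12 : b1 < a2 ∨ b2 < a1 := by
    by_contra hw
    push_neg at hw
    exact Finset.disjoint_left.mp d12 (Finset.mem_Icc.mpr (by omega : a1 ≤ max a1 a2 ∧ max a1 a2 ≤ b1))
      (Finset.mem_Icc.mpr (by omega))
  have w13 : b1 < a3 ∨ b3 < a1 := by
    by_contra hw
    push_neg at hw
    exact Finset.disjoint_left.mp d13 (Finset.mem_Icc.mpr (by omega : a1 ≤ max a1 a3 ∧ max a1 a3 ≤ b1))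
      (Finset.mem_Icc.mpr (by omega))
  have w23 : b2 < a3 ∨ b3 < a2 := by
    by_contra hw
    push_neg at hw
    exact Finset.disjoint_left.mp d23 (Finset.mem_Icc.mpr (by omega : a2 ≤ max a2 a3 ∧ max a2 a3 ≤ b2))
      (Finset.mem_Icc.mpr (by omega))
  by_cases hc : (b1 + 1 = a2 ∨ b2 + 1 = a1) ∨ (b2 + 1 = a3 ∨ b3 + 1 = a2)
  · rcases hc with h | h
    · left
      refine consecN_of_eq_Icc (a := min a1 a2) (b := max b1 b2) ?_
      ext t
      simp only [Finset.mem_union, Finset.mem_Icc]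
      omega
    · right
      refine consecN_of_eq_Icc (a := min a2 a3) (b := max b2 b3) ?_
      ext t
      simp only [Finset.mem_union, Finset.mem_Icc]
      omega
  · exfalso
    push_neg at hc
    obtain ⟨⟨q1, q2⟩, q3, q4⟩ := hc
    rcases w12 with h | h
    · have hy : a2 - 1 ∈ Finset.Icc a1 b1 ∪ Finset.Icc a2 b2 ∪ Finset.Icc a3 b3 := by
        refine hu (x := b1) (z := a2) ?_ ?_ (by omega) (by omega)
        · simp only [Finset.mem_union, Finset.mem_Icc]; omega
        · simp only [Finset.mem_union, Finset.mem_Icc]; omega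
      simp only [Finset.mem_union, Finset.mem_Icc] at hy
      omega
    · have hy : b2 + 1 ∈ Finset.Icc a1 b1 ∪ Finset.Icc a2 b2 ∪ Finset.Icc a3 b3 := by
        refine hu (x := b2) (z := a1) ?_ ?_ (by omega) (by omega)
        · simp only [Finset.mem_union, Finset.mem_Icc]; omega
        · simp only [Finset.mem_union, Finset.mem_Icc]; omega
      simp only [Finset.mem_union, Finset.mem_Icc] at hy
      omega

lemma consecN_image_val {S : Finset (Fin n)} (h : Consec S) :
    ConsecN (S.image (fun x : Fin n => (x : ℕ))) := by
  intro x y z hx hz hxy hyz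
  simp only [Finset.mem_image] at *
  obtain ⟨u, hu, rfl⟩ := hx
  obtain ⟨w, hw, rfl⟩ := hz
  exact ⟨⟨y, lt_of_le_of_lt hyz w.isLt⟩,
    h hu hw (Fin.le_def.mpr hxy) (Fin.le_def.mpr hyz), rfl⟩

lemma consec_of_consecN {S : Finset (Fin n)}
    (h : ConsecN (S.image (fun x : Fin n => (x : ℕ)))) : Consec S := by
  intro x y z hx hz hxy hyz
  have hy := h (Finset.mem_image_of_mem _ hx) (Finset.mem_image_of_mem _ hz)
    (Fin.le_def.mp hxy) (Fin.le_def.mp hyz)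
  simp only [Finset.mem_image] at hy
  obtain ⟨w, hw, hwv⟩ := hy
  rwa [← Fin.ext hwv]

lemma consec_ivl {a b : ℕ} : Consec (ivl n a b) := by
  intro x y z hx hz hxy hyz
  simp only [ivl, Finset.mem_filter, Finset.mem_univ, true_and] at *
  have h1 := Fin.le_def.mp hxy
  have h2 := Fin.le_def.mp hyz
  omega

lemma consec_of_subsingleton {S : Finset (Fin n)}
    (h : ∀ x ∈ S, ∀ y ∈ S, x = y) : Consec S := by
  intro x y z hx hz hxy hyz
  have hxz : x = z := h x hx z hz
  subst hxz
  rwa [le_antisymm hyz hxy]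

lemma isInterval_singleton (π : Equiv.Perm (Fin n)) (a : ℕ) :
    IsInterval π (ivl n a a) := by
  have hsub : ∀ x ∈ ivl n a a, ∀ y ∈ ivl n a a, x = y := by
    intro x hx y hy
    simp only [ivl, Finset.mem_filter, Finset.mem_univ, true_and] at hx hy
    exact Fin.ext (by omega)
  refine ⟨consec_of_subsingleton hsub, consec_of_subsingleton ?_⟩
  intro x hx y hy
  simp only [Finset.mem_image] at hx hy
  obtain ⟨u, hu, rfl⟩ := hx
  obtain ⟨w, hw, rfl⟩ := hy
  rw [hsub u hu w hw]

lemma isInterval_full (π : Equiv.Perm (Fin n)) :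
    IsInterval π (ivl n 1 n) := by
  have hf : ivl n 1 n = Finset.univ := by
    ext x
    simp only [ivl, Finset.mem_filter, Finset.mem_univ, true_and, iff_true]
    omega
  rw [hf]
  constructor
  · intro x y z _ _ _ _; exact Finset.mem_univ y
  · intro x y z _ _ _ _
    simp only [Finset.mem_image, Finset.mem_univ, true_and]
    exact ⟨π y, by simp⟩

lemma edge_interval (π : Equiv.Perm (Fin n)) {x y : ℕ}
    (hx : 1 ≤ x) (hxy : x < y)
    (he : EdgeOf (n + 1) (Phi n (PosetPairs n π)) (x, y)) :
    IsInterval π (ivl n x (y - 1)) := by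
  rcases he with hd | ho
  · obtain ⟨a, b, hP, hab, hnot, heq⟩ := hd
    obtain ⟨h1, h2⟩ := Prod.mk.injEq .. ▸ heq
    have : y - 1 = b := by omega
    rw [h1, this]
    exact hP.2.2.2
  · rcases ho with ⟨_, h2, _⟩ | ⟨h1, h2⟩
    · simp only at h2
      have : y - 1 = x := by omega
      rw [this]
      exact isInterval_singleton π x
    · simp only at h1 h2
      subst h1
      have : y - 1 = n := by omega
      rw [this]
      exact isInterval_full π

lemma ivl_nonempty {a b : ℕ} (ha : 1 ≤ a) (hab : a ≤ b) (hb : b ≤ n) :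
    (ivl n a b).Nonempty := by
  refine ⟨⟨a - 1, by omega⟩, ?_⟩
  simp only [ivl, Finset.mem_filter, Finset.mem_univ, true_and]
  omega

lemma ivl_union {a b c : ℕ} (hab : a ≤ b) (hbc : b ≤ c) :
    ivl n a (b - 1) ∪ ivl n b (c - 1) = ivl n a (c - 1) := by
  ext t
  simp only [ivl, Finset.mem_union, Finset.mem_filter, Finset.mem_univ, true_and]
  omega

lemma ivl_disjoint {a b c d : ℕ} (h : b < c) :
    Disjoint (ivl n a b) (ivl n c d) := by
  rw [Finset.disjoint_left]
  intro t ht ht'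
  simp only [ivl, Finset.mem_filter, Finset.mem_univ, true_and] at ht ht'
  omega

end Aux


/-- the dissection Φ(P(π)) arising from the interval poset of a
permutation π never contains a quadrilateral face. -/
theorem phi_no_quad_face (n : ℕ) (π : Equiv.Perm (Fin n)) :
    ¬ HasQuadFace (n + 1) (Phi n (PosetPairs n π)) := by
  rintro ⟨a, b, c, d, ha, hab, hbc, hcd, hd, eab, ebc, ecd, ead, hnd⟩
  set D := Phi n (PosetPairs n π) with hD
  have Iab : IsInterval π (ivl n a (b - 1)) := edge_interval π ha hab eab
  have Ibc : IsInterval π (ivl n b (c - 1)) := edge_interval π (by omega) hbc ebc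
  have Icd : IsInterval π (ivl n c (d - 1)) := edge_interval π (by omega) hcd ecd
  have Iad : IsInterval π (ivl n a (d - 1)) := edge_interval π ha (by omega) ead
  set f : Fin n → ℕ := fun t => ((π.symm t : Fin n) : ℕ) with hf
  have hfim : ∀ S : Finset (Fin n),
      (S.image π.symm).image (fun x : Fin n => (x : ℕ)) = S.image f := fun S =>
    Finset.image_image ..
  have hfinj : Function.Injective f := fun u v huv =>
    π.symm.injective (Fin.ext huv)
  have hT1 : ConsecN ((ivl n a (b - 1)).image f) := hfim _ ▸ consecN_image_val Iab.2
  have hT2 : ConsecN ((ivl n b (c - 1)).image f) := hfim _ ▸ consecN_image_val Ibc.2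
  have hT3 : ConsecN ((ivl n c (d - 1)).image f) := hfim _ ▸ consecN_image_val Icd.2
  have hun : (ivl n a (b - 1)).image f ∪ (ivl n b (c - 1)).image f ∪ (ivl n c (d - 1)).image f
      = (ivl n a (d - 1)).image f := by
    rw [← Finset.image_union, ← Finset.image_union, ivl_union (by omega) (by omega),
      ivl_union (by omega) (by omega)]
  have hTu : ConsecN ((ivl n a (b - 1)).image f ∪ (ivl n b (c - 1)).image f
      ∪ (ivl n c (d - 1)).image f) := by
    rw [hun]
    exact hfim _ ▸ consecN_image_val Iad.2
  have hn1 : ((ivl n a (b - 1)).image f).Nonempty :=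
    (ivl_nonempty ha (by omega) (by omega)).image f
  have hn2 : ((ivl n b (c - 1)).image f).Nonempty :=
    (ivl_nonempty (by omega) (by omega) (by omega)).image f
  have hn3 : ((ivl n c (d - 1)).image f).Nonempty :=
    (ivl_nonempty (by omega) (by omega) (by omega)).image f
  have hd12 : Disjoint ((ivl n a (b - 1)).image f) ((ivl n b (c - 1)).image f) :=
    (Finset.disjoint_image hfinj).mpr (ivl_disjoint (by omega))
  have hd13 : Disjoint ((ivl n a (b - 1)).image f) ((ivl n c (d - 1)).image f) :=
    (Finset.disjoint_image hfinj).mpr (ivl_disjoint (by omega))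
  have hd23 : Disjoint ((ivl n b (c - 1)).image f) ((ivl n c (d - 1)).image f) :=
    (Finset.disjoint_image hfinj).mpr (ivl_disjoint (by omega))
  rcases three_blocks hT1 hT2 hT3 hTu hn1 hn2 hn3 hd12 hd13 hd23 with hC | hC
  · -- [a, c-1] is an interval, so (a, c) ∈ D, contradiction
    rw [← Finset.image_union, ivl_union (by omega) (by omega)] at hC
    have hI : IsInterval π (ivl n a (c - 1)) :=
      ⟨consec_ivl, consec_of_consecN (by rw [hfim]; exact hC)⟩
    have hmem : (a, c) ∈ D := by
      refine ⟨a, c - 1, ⟨ha, by omega, by omega, hI⟩, by omega, by omega, ?_⟩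
      have : c - 1 + 1 = c := by omega
      rw [this]
    exact hnd ⟨(a, c), hmem, by tauto⟩
  · -- [b, d-1] is an interval, so (b, d) ∈ D, contradiction
    rw [← Finset.image_union, ivl_union (by omega) (by omega)] at hC
    have hI : IsInterval π (ivl n b (d - 1)) :=
      ⟨consec_ivl, consec_of_consecN (by rw [hfim]; exact hC)⟩
    have hmem : (b, d) ∈ D := by
      refine ⟨b, d - 1, ⟨by omega, by omega, by omega, hI⟩, by omega, by omega, ?_⟩
      have : d - 1 + 1 = d := by omega
      rw [this]
    exact hnd ⟨(b, d), hmem, by tauto⟩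
end
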